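/- Assume f(x) divides g(x), g(x) divides (g^{[q]})^perp(x), and (g^{[q]})^perp(x) divides (f^{[q]})^perp(x). Then the quasi-cyclic code Q := Q_{q^2}(f,g,h) over F_{q^2} satisfies: Q^{perp_h} is contained in Q; the dimension of Q over F_{q^2} is 2n - deg(f(x)) - deg(g(x)); and every nonzero codeword of Q has Hamming weight at least d_{q^2}^e(f,g,h), the minimum of d([g(x)]); d([(x^n-1)/gcd(x^n-1, h(x))]); d([lcm(f(x), g(x)/gcd(g(x), h(x)))]); and d([f(x)]) + d([gcd(h(x)f(x), g(x))]). -/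

import Mathlib

open Polynomial Finset

noncomputable section

variable {F : Type*} [Field F] [DecidableEq F]

/-- The vector in `F^n` corresponding to the residue class of a polynomial
in `F[x]/(x^n-1)`: the coefficients of its canonical representative of degree `< n`. -/
def vecOf (n : ℕ) : F[X] →ₗ[F] (Fin n → F) where
  toFun a := fun i => (a %ₘ (X ^ n - 1)).coeff i
  map_add' a b := by
    funext i
    simp [Polynomial.add_modByMonic]
  map_smul' c a := by
    funext i
    simp [Polynomial.smul_modByMonic]

/-- The quasi-cyclic code `Q_q(f,g,h)`: the `F`-subspace of `F^n × F^n ≃ F^{2n}`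
corresponding to the `R`-submodule of `R²` generated by `([f],[h f])` and `(0,[g])`. -/
def QCcode (n : ℕ) (f g h : F[X]) : Submodule F ((Fin n → F) × (Fin n → F)) where
  carrier := {v | ∃ a b : F[X], v = (vecOf n (a * f), vecOf n (a * h * f + b * g))}
  zero_mem' := ⟨0, 0, by simp; rfl⟩
  add_mem' := by
    rintro v w ⟨a1, b1, rfl⟩ ⟨a2, b2, rfl⟩
    refine ⟨a1 + a2, b1 + b2, ?_⟩
    have h1 : (a1 + a2) * f = a1 * f + a2 * f := by ring
    have h2 : (a1 + a2) * h * f + (b1 + b2) * g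
        = (a1 * h * f + b1 * g) + (a2 * h * f + b2 * g) := by ring
    rw [h1, h2, map_add (vecOf n) (a1 * f) (a2 * f),
      map_add (vecOf n) (a1 * h * f + b1 * g) (a2 * h * f + b2 * g)]
    rfl
  smul_mem' := by
    rintro c v ⟨a, b, rfl⟩
    refine ⟨c • a, c • b, ?_⟩
    have h1 : (c • a) * f = c • (a * f) := smul_mul_assoc c a f
    have h2 : (c • a) * h * f + (c • b) * g = c • (a * h * f + b * g) := by
      rw [smul_add, smul_mul_assoc, smul_mul_assoc, smul_mul_assoc]
    rw [h1, h2, map_smul, map_smul]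
    rfl

/-- Hamming weight of a vector. -/
def hWt {n : ℕ} (x : Fin n → F) : ℕ := Nat.card {i : Fin n // x i ≠ 0}

/-- Hamming weight of a vector of `F^{2n}` presented as a pair. -/
def hWt2 {n : ℕ} (v : (Fin n → F) × (Fin n → F)) : ℕ := hWt v.1 + hWt v.2

/-- Symplectic weight. -/
def sWt {n : ℕ} (v : (Fin n → F) × (Fin n → F)) : ℕ :=
  Nat.card {i : Fin n // (v.1 i, v.2 i) ≠ (0, 0)}

/-- Euclidean inner product on `F^n`. -/
def eInn {n : ℕ} (x y : Fin n → F) : F := ∑ i, x i * y i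

/-- Euclidean inner product on `F^{2n}`. -/
def eInn2 {n : ℕ} (x y : (Fin n → F) × (Fin n → F)) : F := eInn x.1 y.1 + eInn x.2 y.2

/-- Symplectic inner product on `F^{2n}`. -/
def sInn {n : ℕ} (x y : (Fin n → F) × (Fin n → F)) : F :=
  ∑ i, (x.1 i * y.2 i - x.2 i * y.1 i)

/-- Hermitian inner product on `F^{2n}` (with respect to `x ↦ x^q`). -/
def hInn2 (q : ℕ) {n : ℕ} (x y : (Fin n → F) × (Fin n → F)) : F :=
  (∑ i, x.1 i ^ q * y.1 i) + ∑ i, x.2 i ^ q * y.2 i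

def sDualSet {n : ℕ} (C : Set ((Fin n → F) × (Fin n → F))) : Set ((Fin n → F) × (Fin n → F)) :=
  {x | ∀ y ∈ C, sInn x y = 0}

def eDualSet {n : ℕ} (C : Set ((Fin n → F) × (Fin n → F))) : Set ((Fin n → F) × (Fin n → F)) :=
  {x | ∀ y ∈ C, eInn2 x y = 0}

def hDualSet (q : ℕ) {n : ℕ} (C : Set ((Fin n → F) × (Fin n → F))) :
    Set ((Fin n → F) × (Fin n → F)) :=
  {x | ∀ y ∈ C, hInn2 q x y = 0}

/-- `x^n f(1/x)` for `f` of degree `< n`. -/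
def barPoly (n : ℕ) (f : F[X]) : F[X] := ∑ i ∈ f.support, C (f.coeff i) * X ^ (n - i)

/-- `f^⊥ = x^{deg f'} f'(1/x)` where `f f' = x^n - 1`. -/
def perpPoly (n : ℕ) (f : F[X]) : F[X] := ((X ^ n - 1) /ₘ f).reverse

/-- coefficientwise `q`-th power. -/
def polyQ (q : ℕ) (f : F[X]) : F[X] := ∑ i ∈ f.support, C (f.coeff i ^ q) * X ^ i

/-- minimum Hamming weight of the cyclic code generated by `[u]`. -/
def cycDist (n : ℕ) (u : F[X]) : ℕ :=
  sInf {w | ∃ a : F[X], vecOf n (a * u) ≠ 0 ∧ w = hWt (vecOf n (a * u))}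

/-- The general QC set generated by `([u₁],[v₁])` and `([u₂],[v₂])`. -/
def QCspan (n : ℕ) (u₁ v₁ u₂ v₂ : F[X]) : Set ((Fin n → F) × (Fin n → F)) :=
  {w | ∃ a b : F[X], w = (vecOf n (a * u₁ + b * u₂), vecOf n (a * v₁ + b * v₂))}

/-- The lower bound `d_q(f,g,h)` for the symplectic weight (a rational number). -/
def dSymp (q n : ℕ) (f g h : F[X]) : ℚ :=
  min (min (min (cycDist n g : ℚ)
    (cycDist n ((X ^ n - 1) / GCDMonoid.gcd (X ^ n - 1) h) : ℚ))
    (cycDist n (GCDMonoid.lcm f (g / GCDMonoid.gcd g h)) : ℚ))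
    ((cycDist n f + cycDist n (GCDMonoid.gcd (h * f) g) + ((q : ℚ) - 1) * cycDist n (GCDMonoid.gcd f g)) / q)

/-- The lower bound `d_q^e(f,g,h)` for the minimum distance. -/
def dEucl (n : ℕ) (f g h : F[X]) : ℕ :=
  min (min (min (cycDist n g)
    (cycDist n ((X ^ n - 1) / GCDMonoid.gcd (X ^ n - 1) h)))
    (cycDist n (GCDMonoid.lcm f (g / GCDMonoid.gcd g h))))
    (cycDist n f + cycDist n (GCDMonoid.gcd (h * f) g))

/-! Identify words with polynomials modulo `X ^ n - 1`. The Hermitian pairing `⟨z, c⟩_h` is the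
coefficient of `X ^ (n - 1)` in `c` times the reflection of `z^q`, and this functional is
nondegenerate, so a word `z` orthogonal to the cyclic code generated by `u` satisfies
`X ^ n - 1 ∣ u * reflect (z^q)`. Applying the Frobenius `x ↦ x ^ q` (an involution, as `|F| = q²`)
and reflecting once more turns this into `(u^[q])^⊥ ∣ z`. For `x` in the Hermitian dual of `Q`,
the generator `(0, g)` gives `(g^[q])^⊥ ∣ x₂` and `(f, h f)` gives
`(f^[q])^⊥ ∣ x₁ X^k + reverse (h^[q]) x₂`; the chain `g ∣ (g^[q])^⊥ ∣ (f^[q])^⊥` makes `g` divide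
`x₂` and then `x₁` (`X` is prime to `g`), which puts `x` in `Q` since `f ∣ g`.

The dimension count comes from the injective parametrisation of `Q` by pairs `(a, b)` with
`deg a < n - deg f` and `deg b < n - deg g`; the distance bound from a case split on which
component of a codeword vanishes. -/

section XPowSubOne

variable {K : Type*} [Field K] {n : ℕ}

lemma monic_X_pow_sub_one (hn : 0 < n) : (X ^ n - 1 : K[X]).Monic := by
  simpa using monic_X_pow_sub_C (1 : K) hn.ne'

lemma natDegree_X_pow_sub_one : (X ^ n - 1 : K[X]).natDegree = n := by
  simpa using natDegree_X_pow_sub_C (n := n) (r := (1 : K))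

lemma mul_divByMonic_of_dvd {u p : K[X]} (hu : u.Monic) (h : u ∣ p) : u * (p /ₘ u) = p := by
  rw [divByMonic_eq_div _ hu, EuclideanDomain.mul_div_cancel' hu.ne_zero h]

lemma monic_X_pow_sub_one_divByMonic (hn : 0 < n) {u : K[X]} (hu : u.Monic)
    (hdvd : u ∣ X ^ n - 1) : ((X ^ n - 1) /ₘ u).Monic :=
  hu.of_mul_monic_left <| (mul_divByMonic_of_dvd hu hdvd).symm ▸ monic_X_pow_sub_one hn

lemma natDegree_le_of_dvd_X_pow_sub_one (hn : 0 < n) {u : K[X]} (hdvd : u ∣ X ^ n - 1) :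
    u.natDegree ≤ n := by
  simpa [natDegree_X_pow_sub_one] using
    natDegree_le_of_dvd hdvd (monic_X_pow_sub_one (K := K) hn).ne_zero

lemma isCoprime_X_pow_of_dvd_X_pow_sub_one (hn : 0 < n) {u : K[X]} (hdvd : u ∣ X ^ n - 1)
    (k : ℕ) : IsCoprime (X ^ k) u := by
  refine IsCoprime.pow_left (irreducible_X.coprime_iff_not_dvd.mpr fun hX => ?_)
  have := X_dvd_iff.mp (hX.trans hdvd)
  simp [hn.ne] at this

lemma reflect_X_pow_sub_one : reflect n (X ^ n - 1 : K[X]) = -(X ^ n - 1) := by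
  rw [reflect_sub, reflect_one, reflect_monomial, revAt_le le_rfl, Nat.sub_self]
  ring

lemma reverse_X_pow_sub_one : reverse (X ^ n - 1 : K[X]) = -(X ^ n - 1) := by
  rw [reverse, natDegree_X_pow_sub_one, reflect_X_pow_sub_one]

end XPowSubOne

section Reflect

variable {K : Type*} [Field K] {n : ℕ}

lemma X_pow_sub_one_dvd_reverse_mul_reflect (hn : 0 < n) {c d : K[X]} {m : ℕ}
    (hd : d.natDegree ≤ m) (h : X ^ n - 1 ∣ c * d) : X ^ n - 1 ∣ reverse c * reflect m d := by
  rcases eq_or_ne c 0 with rfl | hc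
  · simp
  rcases eq_or_ne d 0 with rfl | hd0
  · simp
  obtain ⟨s, hs⟩ := h
  have hs0 : s ≠ 0 := by
    rintro rfl
    exact mul_ne_zero hc hd0 (by simpa using hs)
  have hdeg : c.natDegree + d.natDegree = n + s.natDegree := by
    rw [← natDegree_mul hc hd0, hs, natDegree_mul (monic_X_pow_sub_one hn).ne_zero hs0,
      natDegree_X_pow_sub_one]
  obtain ⟨k, hk⟩ : ∃ k, c.natDegree + m = n + k := ⟨c.natDegree + m - n, by omega⟩
  refine ⟨-reflect k s, ?_⟩
  rw [reverse, ← reflect_mul c d le_rfl hd, hs, hk,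
    reflect_mul _ s natDegree_X_pow_sub_one.le (by omega), reflect_X_pow_sub_one]
  ring

lemma reverse_mul_perpPoly {u : K[X]} (hu : u.Monic) (hdvd : u ∣ X ^ n - 1) :
    reverse u * perpPoly n u = -(X ^ n - 1) := by
  rw [perpPoly, ← reverse_mul_of_domain, mul_divByMonic_of_dvd hu hdvd, reverse_X_pow_sub_one]

lemma perpPoly_dvd_reflect (hn : 0 < n) {u W : K[X]} (hu : u.Monic) (hdvd : u ∣ X ^ n - 1)
    {m : ℕ} (hW : W.natDegree ≤ m) (h : X ^ n - 1 ∣ u * W) : perpPoly n u ∣ reflect m W := by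
  have h' := X_pow_sub_one_dvd_reverse_mul_reflect hn hW h
  rw [← neg_dvd, ← reverse_mul_perpPoly hu hdvd] at h'
  exact (mul_dvd_mul_iff_left (mt reverse_eq_zero.mp hu.ne_zero)).mp h'

lemma natDegree_reflect_le_of_le {N : ℕ} {p : K[X]} (h : p.natDegree ≤ N) :
    (reflect N p).natDegree ≤ N :=
  natDegree_reflect_le.trans (max_le le_rfl h)

lemma reflect_add_mul_reflect {P₁ P₂ : K[X]} {N : ℕ} (h₁ : P₁.natDegree ≤ N)
    (h₂ : P₂.natDegree ≤ N) (c : K[X]) :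
    reflect (N + c.natDegree) (reflect N P₁ + c * reflect N P₂)
      = P₁ * X ^ c.natDegree + reverse c * P₂ := by
  rw [reflect_add, ← mul_one (reflect N P₁), reflect_mul _ _ (natDegree_reflect_le_of_le h₁)
    (natDegree_one.trans_le (Nat.zero_le c.natDegree)), add_comm N,
    reflect_mul _ _ le_rfl (natDegree_reflect_le_of_le h₂), reflect_reflect, reflect_reflect,
    reflect_one, reverse]

lemma natDegree_reflect_add_mul_reflect_le {P₁ P₂ : K[X]} {N : ℕ} (h₁ : P₁.natDegree ≤ N)
    (h₂ : P₂.natDegree ≤ N) (c : K[X]) :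
    (reflect N P₁ + c * reflect N P₂).natDegree ≤ N + c.natDegree :=
  natDegree_add_le_of_degree_le ((natDegree_reflect_le_of_le h₁).trans (Nat.le_add_right _ _))
    (natDegree_mul_le.trans (by have := natDegree_reflect_le_of_le h₂; omega))

end Reflect

section PolyOfVec

variable {K : Type*} [Field K] {n : ℕ}

def polyOfVec (z : Fin n → K) : K[X] := (degreeLTEquiv K n).symm z

lemma coeff_polyOfVec (z : Fin n → K) (j : ℕ) :
    (polyOfVec z).coeff j = if hj : j < n then z ⟨j, hj⟩ else 0 := by
  split_ifs with hj
  · exact congrFun ((degreeLTEquiv K n).apply_symm_apply z) ⟨j, hj⟩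
  · exact coeff_eq_zero_of_degree_lt <| (mem_degreeLT.mp ((degreeLTEquiv K n).symm z).2).trans_le
      (by exact_mod_cast not_lt.mp hj)

lemma degree_polyOfVec_lt (z : Fin n → K) : (polyOfVec z).degree < n :=
  mem_degreeLT.mp ((degreeLTEquiv K n).symm z).2

lemma natDegree_polyOfVec_le (z : Fin n → K) : (polyOfVec z).natDegree ≤ n - 1 :=
  natDegree_le_iff_coeff_eq_zero.mpr fun j hj => by
    rw [coeff_polyOfVec, dif_neg (by omega)]

lemma map_polyOfVec {L : Type*} [Field L] (φ : K →+* L) (z : Fin n → K) :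
    (polyOfVec z).map φ = polyOfVec (φ ∘ z) := by
  ext j
  simp only [coeff_map, coeff_polyOfVec]
  split_ifs <;> simp

end PolyOfVec

section VecOf

variable {K : Type*} [Field K] {n : ℕ}

lemma vecOf_apply (a : K[X]) (i : Fin n) : vecOf n a i = (a %ₘ (X ^ n - 1)).coeff i := rfl

lemma polyOfVec_vecOf (hn : 0 < n) (a : K[X]) : polyOfVec (vecOf n a) = a %ₘ (X ^ n - 1) := by
  ext j
  rw [coeff_polyOfVec]
  split_ifs with hj
  · rfl
  · refine (coeff_eq_zero_of_degree_lt ((degree_modByMonic_lt a (monic_X_pow_sub_one hn)).trans_le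
      ?_)).symm
    rw [degree_eq_natDegree (monic_X_pow_sub_one hn).ne_zero, natDegree_X_pow_sub_one]
    exact_mod_cast not_lt.mp hj

lemma vecOf_polyOfVec (hn : 0 < n) (z : Fin n → K) : vecOf n (polyOfVec z) = z := by
  funext i
  rw [vecOf_apply, (modByMonic_eq_self_iff (monic_X_pow_sub_one hn)).mpr, coeff_polyOfVec,
    dif_pos i.isLt]
  rw [degree_eq_natDegree (monic_X_pow_sub_one hn).ne_zero, natDegree_X_pow_sub_one]
  exact degree_polyOfVec_lt z

lemma vecOf_eq_zero_iff (hn : 0 < n) {a : K[X]} : vecOf n a = 0 ↔ X ^ n - 1 ∣ a := by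
  rw [← modByMonic_eq_zero_iff_dvd (monic_X_pow_sub_one hn), ← polyOfVec_vecOf hn]
  simp [polyOfVec]

lemma vecOf_eq_of_dvd_sub (hn : 0 < n) {a b : K[X]} (h : X ^ n - 1 ∣ a - b) :
    vecOf n a = vecOf n b :=
  sub_eq_zero.mp (by rw [← map_sub]; exact (vecOf_eq_zero_iff hn).mpr h)

end VecOf

section Pairing

variable {K : Type*} [Field K] {n : ℕ}

def coeffPredMod (n : ℕ) : K[X] →ₗ[K] K :=
  (lcoeff K (n - 1)).comp (modByMonicHom (X ^ n - 1))

lemma coeffPredMod_apply (p : K[X]) : coeffPredMod n p = (p %ₘ (X ^ n - 1)).coeff (n - 1) := rfl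

lemma coeffPredMod_eq_zero_of_dvd (hn : 0 < n) {p : K[X]} (h : X ^ n - 1 ∣ p) :
    coeffPredMod n p = 0 := by
  rw [coeffPredMod_apply, (modByMonic_eq_zero_iff_dvd (monic_X_pow_sub_one hn)).mpr h,
    coeff_zero]

lemma coeffPredMod_modByMonic_mul (hn : 0 < n) (c a : K[X]) :
    coeffPredMod n (c %ₘ (X ^ n - 1) * a) = coeffPredMod n (c * a) := by
  conv_rhs => rw [← modByMonic_add_div c (X ^ n - 1), add_mul, map_add]
  rw [coeffPredMod_eq_zero_of_dvd hn (dvd_mul_of_dvd_left (dvd_mul_right _ _) a), add_zero]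

lemma coeffPredMod_of_natDegree_le (hn : 0 < n) {p : K[X]} (hp : p.natDegree ≤ 2 * n - 2) :
    coeffPredMod n p = p.coeff (n - 1) := by
  have hN := monic_X_pow_sub_one (K := K) hn
  have hquot : (p /ₘ (X ^ n - 1)).coeff (n - 1) = 0 := by
    rcases eq_or_ne (p /ₘ (X ^ n - 1)) 0 with h0 | h0
    · rw [h0, coeff_zero]
    have hnp : n ≤ p.natDegree := by
      have := mt (divByMonic_eq_zero_iff hN).mpr h0
      rw [not_lt, degree_eq_natDegree hN.ne_zero, natDegree_X_pow_sub_one] at this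
      exact_mod_cast this.trans degree_le_natDegree
    refine coeff_eq_zero_of_natDegree_lt ?_
    rw [natDegree_divByMonic p hN, natDegree_X_pow_sub_one]
    omega
  conv_rhs => rw [← modByMonic_add_div p (X ^ n - 1)]
  rw [coeff_add, sub_mul, one_mul, coeff_sub, coeff_X_pow_mul', if_neg (by omega), hquot,
    sub_zero, add_zero, coeffPredMod_apply]

lemma coeff_mul_reflect_polyOfVec (hn : 0 < n) (w : Fin n → K) (r : K[X]) :
    (r * reflect (n - 1) (polyOfVec w)).coeff (n - 1) = ∑ i : Fin n, w i * r.coeff i := by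
  rw [coeff_mul, Finset.Nat.sum_antidiagonal_eq_sum_range_succ_mk,
    (by omega : (n - 1).succ = n), ← Fin.sum_univ_eq_sum_range]
  refine Finset.sum_congr rfl fun i _ => ?_
  rw [coeff_reflect, revAt_le (by omega), coeff_polyOfVec,
    dif_pos (by omega : n - 1 - (n - 1 - (i : ℕ)) < n), mul_comm]
  congr 3
  omega

lemma sum_mul_vecOf_eq_coeffPredMod (hn : 0 < n) (w : Fin n → K) (c : K[X]) :
    ∑ i, w i * vecOf n c i = coeffPredMod n (c * reflect (n - 1) (polyOfVec w)) := by
  have hdeg : (c %ₘ (X ^ n - 1) * reflect (n - 1) (polyOfVec w)).natDegree ≤ 2 * n - 2 := by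
    refine natDegree_mul_le.trans ?_
    have h₁ := natDegree_polyOfVec_le (vecOf n c)
    have h₂ := natDegree_reflect_le_of_le (natDegree_polyOfVec_le w)
    rw [polyOfVec_vecOf hn] at h₁
    omega
  rw [← coeffPredMod_modByMonic_mul hn, coeffPredMod_of_natDegree_le hn hdeg,
    coeff_mul_reflect_polyOfVec hn w _]
  rfl

lemma X_pow_sub_one_dvd_of_forall_coeffPredMod_mul_eq_zero (hn : 0 < n) {w : K[X]}
    (h : ∀ a, coeffPredMod n (a * w) = 0) : X ^ n - 1 ∣ w := by
  by_contra hm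
  rw [← modByMonic_eq_zero_iff_dvd (monic_X_pow_sub_one hn)] at hm
  have hdm : (w %ₘ (X ^ n - 1)).natDegree ≤ n - 1 := by
    simpa only [polyOfVec_vecOf hn] using natDegree_polyOfVec_le (vecOf n w)
  -- shift the remainder so that its leading coefficient sits at `X ^ (n - 1)`
  obtain ⟨k, hk⟩ : ∃ k, n - 1 = (w %ₘ (X ^ n - 1)).natDegree + k :=
    ⟨_, (Nat.add_sub_of_le hdm).symm⟩
  have hshift := h (X ^ k)
  rw [mul_comm, ← coeffPredMod_modByMonic_mul hn, mul_comm,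
    coeffPredMod_of_natDegree_le hn (natDegree_mul_le.trans (by rw [natDegree_X_pow]; omega)),
    hk, coeff_X_pow_mul] at hshift
  exact hm (leadingCoeff_eq_zero.mp hshift)

end Pairing

section Hermitian

variable {K : Type*} [Field K] {n : ℕ}

def conjReflect (q : ℕ) (z : Fin n → K) : K[X] := reflect (n - 1) (polyOfVec fun i => z i ^ q)

lemma hInn2_vecOf (hn : 0 < n) (q : ℕ) (x : (Fin n → K) × (Fin n → K)) (u v : K[X]) :
    hInn2 q x (vecOf n u, vecOf n v)
      = coeffPredMod n (u * conjReflect q x.1 + v * conjReflect q x.2) := by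
  rw [hInn2, map_add, conjReflect, conjReflect, ← sum_mul_vecOf_eq_coeffPredMod hn,
    ← sum_mul_vecOf_eq_coeffPredMod hn]

lemma X_pow_sub_one_dvd_of_mem_hDualSet (hn : 0 < n) {q : ℕ} {f g h : K[X]}
    {x : (Fin n → K) × (Fin n → K)} (hx : x ∈ hDualSet q (QCcode n f g h : Set _)) :
    X ^ n - 1 ∣ f * (conjReflect q x.1 + h * conjReflect q x.2) ∧
      X ^ n - 1 ∣ g * conjReflect q x.2 := by
  have horth : ∀ a b : K[X], coeffPredMod n
      (a * (f * (conjReflect q x.1 + h * conjReflect q x.2)) + b * (g * conjReflect q x.2)) = 0 :=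
    fun a b => by
      rw [← hx _ ⟨a, b, rfl⟩, hInn2_vecOf hn]
      ring_nf
  exact ⟨X_pow_sub_one_dvd_of_forall_coeffPredMod_mul_eq_zero hn fun a => by simpa using horth a 0,
    X_pow_sub_one_dvd_of_forall_coeffPredMod_mul_eq_zero hn fun b => by simpa using horth 0 b⟩

variable {q : ℕ} {φ : K →+* K}

lemma map_conjReflect (hφ : ∀ x, φ x = x ^ q) (hφφ : ∀ x, φ (φ x) = x) (z : Fin n → K) :
    (conjReflect q z).map φ = reflect (n - 1) (polyOfVec z) := by
  rw [conjReflect, ← reflect_map, map_polyOfVec]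
  congr 2
  funext i
  simp [← hφ, hφφ]

lemma polyQ_eq_map (hφ : ∀ x, φ x = x ^ q) (f : K[X]) : polyQ q f = f.map φ := by
  ext i
  simp only [polyQ, finsetSum_coeff, coeff_C_mul_X_pow, coeff_map, hφ]
  rw [Finset.sum_ite_eq f.support i (fun j => f.coeff j ^ q)]
  split_ifs with hi
  · rfl
  · rw [notMem_support_iff.mp hi, ← hφ, map_zero]

end Hermitian

section DualContainment

variable {K : Type*} [Field K] {n : ℕ}

lemma exists_ringHom_pow_involutive [Fintype K] {p r q : ℕ} (hp : p.Prime) (hq : q = p ^ r)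
    (hK : Fintype.card K = q ^ 2) :
    ∃ φ : K →+* K, (∀ x, φ x = x ^ q) ∧ ∀ x, φ (φ x) = x := by
  have := Fact.mk hp
  have : CharP K p := charP_of_card_eq_prime_pow (f := r * 2) (by rw [hK, hq, ← pow_mul])
  refine ⟨iterateFrobenius K p r, fun x => by rw [iterateFrobenius_def, hq], fun x => ?_⟩
  rw [iterateFrobenius_def, iterateFrobenius_def, ← pow_mul, ← hq, ← sq, ← hK,
    FiniteField.pow_card]

lemma mem_QCcode_of_dvd {f g h P₁ P₂ : K[X]} (h₁ : f ∣ P₁) (h₂ : g ∣ P₂ - h * P₁) :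
    (vecOf n P₁, vecOf n P₂) ∈ QCcode n f g h := by
  obtain ⟨a, rfl⟩ := h₁
  obtain ⟨b, hb⟩ := h₂
  exact ⟨a, b, by rw [mul_comm f a, (by linear_combination hb : P₂ = a * h * f + b * g)]⟩

lemma hDualSet_subset_QCcode (hn : 0 < n) {q : ℕ} (φ : K →+* K) (hφ : ∀ x, φ x = x ^ q)
    (hφφ : ∀ x, φ (φ x) = x) {f g h : K[X]} (hf : f.Monic) (hg : g.Monic)
    (hfdvd : f ∣ X ^ n - 1) (hgdvd : g ∣ X ^ n - 1) (hd1 : f ∣ g)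
    (hd2 : g ∣ perpPoly n (g.map φ)) (hd3 : perpPoly n (g.map φ) ∣ perpPoly n (f.map φ)) :
    hDualSet q (QCcode n f g h : Set ((Fin n → K) × (Fin n → K))) ⊆
      (QCcode n f g h : Set ((Fin n → K) × (Fin n → K))) := by
  intro x hx
  have hmap : ∀ {p : K[X]}, X ^ n - 1 ∣ p → X ^ n - 1 ∣ p.map φ := fun hp => by
    simpa using Polynomial.map_dvd φ hp
  have hmapdvd : ∀ {u : K[X]}, u ∣ X ^ n - 1 → u.map φ ∣ X ^ n - 1 := fun hu => by
    simpa using Polynomial.map_dvd φ hu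
  obtain ⟨hf', hg'⟩ := X_pow_sub_one_dvd_of_mem_hDualSet hn hx
  replace hf' := hmap hf'
  replace hg' := hmap hg'
  simp only [Polynomial.map_mul, Polynomial.map_add, map_conjReflect hφ hφφ] at hf' hg'
  have hP₁ := natDegree_polyOfVec_le x.1
  have hP₂ := natDegree_polyOfVec_le x.2
  have hgP₂ : g ∣ polyOfVec x.2 := hd2.trans <| by
    simpa using perpPoly_dvd_reflect hn (hg.map φ) (hmapdvd hgdvd)
      (natDegree_reflect_le_of_le hP₂) hg'
  have hgP₁X : g ∣ polyOfVec x.1 * X ^ (h.map φ).natDegree + reverse (h.map φ) * polyOfVec x.2 :=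
    (hd2.trans hd3).trans <| reflect_add_mul_reflect hP₁ hP₂ (h.map φ) ▸
      perpPoly_dvd_reflect hn (hf.map φ) (hmapdvd hfdvd)
        (natDegree_reflect_add_mul_reflect_le hP₁ hP₂ _) hf'
  have hgP₁ : g ∣ polyOfVec x.1 :=
    (isCoprime_X_pow_of_dvd_X_pow_sub_one hn hgdvd _).symm.dvd_of_dvd_mul_right
      ((dvd_add_left (hgP₂.mul_left _)).mp hgP₁X)
  have hmem := mem_QCcode_of_dvd (n := n) (hd1.trans hgP₁) (dvd_sub hgP₂ (hgP₁.mul_left h))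
  rwa [vecOf_polyOfVec hn, vecOf_polyOfVec hn] at hmem

end DualContainment

section Dimension

variable {K : Type*} [Field K] {n : ℕ}

def qcMap (n : ℕ) (f g h : K[X]) :
    degreeLT K (n - f.natDegree) × degreeLT K (n - g.natDegree) →ₗ[K]
      (Fin n → K) × (Fin n → K) where
  toFun ab := (vecOf n (ab.1 * f), vecOf n (ab.1 * h * f + ab.2 * g))
  map_add' x y := by
    simp only [Prod.fst_add, Prod.snd_add, Submodule.coe_add, ← map_add, Prod.mk_add_mk]
    congr 2 <;> ring
  map_smul' c x := by
    simp only [Prod.smul_fst, Prod.smul_snd, Submodule.coe_smul, smul_mul_assoc, ← smul_add,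
      map_smul, RingHom.id_apply, Prod.smul_mk]

lemma eq_zero_of_vecOf_mul_eq_zero (hn : 0 < n) {u c : K[X]} (hu : u ∣ X ^ n - 1)
    (hc : c ∈ degreeLT K (n - u.natDegree)) (h : vecOf n (c * u) = 0) : c = 0 := by
  by_contra hc0
  have hu0 : u ≠ 0 := by
    rintro rfl
    exact (monic_X_pow_sub_one (K := K) hn).ne_zero (zero_dvd_iff.mp hu)
  have hlt : c.natDegree < n - u.natDegree := by
    rw [mem_degreeLT, degree_eq_natDegree hc0] at hc
    exact_mod_cast hc
  have := natDegree_le_of_dvd_X_pow_sub_one hn hu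
  refine mul_ne_zero hc0 hu0 (eq_zero_of_dvd_of_natDegree_lt ((vecOf_eq_zero_iff hn).mp h) ?_)
  rw [natDegree_mul hc0 hu0, natDegree_X_pow_sub_one]
  omega

lemma qcMap_injective (hn : 0 < n) {f g h : K[X]} (hfdvd : f ∣ X ^ n - 1)
    (hgdvd : g ∣ X ^ n - 1) : Function.Injective (qcMap n f g h) := by
  refine (injective_iff_map_eq_zero _).mpr fun ⟨a, b⟩ hab => ?_
  simp only [qcMap, LinearMap.coe_mk, AddHom.coe_mk, Prod.mk_eq_zero] at hab
  have ha := eq_zero_of_vecOf_mul_eq_zero hn hfdvd a.2 hab.1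
  simp only [ha, zero_mul, zero_add] at hab
  have hb := eq_zero_of_vecOf_mul_eq_zero hn hgdvd b.2 hab.2
  ext1 <;> ext1 <;> assumption

lemma modByMonic_mem_degreeLT (hn : 0 < n) {u : K[X]} (hu : u.Monic) (hdvd : u ∣ X ^ n - 1)
    (a : K[X]) : a %ₘ ((X ^ n - 1) /ₘ u) ∈ degreeLT K (n - u.natDegree) := by
  have hv := monic_X_pow_sub_one_divByMonic hn hu hdvd
  have hdeg : ((X ^ n - 1) /ₘ u).natDegree = n - u.natDegree := by
    rw [natDegree_divByMonic _ hu, natDegree_X_pow_sub_one]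
  rw [mem_degreeLT, ← hdeg, ← degree_eq_natDegree hv.ne_zero]
  exact degree_modByMonic_lt a hv

lemma X_pow_sub_one_dvd_sub_modByMonic_mul {u : K[X]} (hu : u.Monic) (hdvd : u ∣ X ^ n - 1)
    (a : K[X]) : X ^ n - 1 ∣ (a - a %ₘ ((X ^ n - 1) /ₘ u)) * u :=
  ⟨a /ₘ ((X ^ n - 1) /ₘ u), by
    linear_combination (-u) * modByMonic_add_div a ((X ^ n - 1) /ₘ u)
      + a /ₘ ((X ^ n - 1) /ₘ u) * mul_divByMonic_of_dvd hu hdvd⟩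

lemma range_qcMap (hn : 0 < n) {f g h : K[X]} (hf : f.Monic) (hg : g.Monic)
    (hfdvd : f ∣ X ^ n - 1) (hgdvd : g ∣ X ^ n - 1) :
    LinearMap.range (qcMap n f g h) = QCcode n f g h := by
  ext v
  constructor
  · rintro ⟨⟨a, b⟩, rfl⟩
    exact ⟨a, b, rfl⟩
  · rintro ⟨a, b, rfl⟩
    refine ⟨⟨⟨_, modByMonic_mem_degreeLT hn hf hfdvd a⟩,
      ⟨_, modByMonic_mem_degreeLT hn hg hgdvd b⟩⟩, ?_⟩
    have ha := X_pow_sub_one_dvd_sub_modByMonic_mul hf hfdvd a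
    have hb := X_pow_sub_one_dvd_sub_modByMonic_mul hg hgdvd b
    refine Prod.ext (vecOf_eq_of_dvd_sub hn ?_) (vecOf_eq_of_dvd_sub hn ?_)
    · rw [← dvd_neg]
      convert ha using 1
      ring
    · rw [← dvd_neg]
      convert (ha.mul_left h).add hb using 1
      ring

lemma finrank_QCcode (hn : 0 < n) {f g h : K[X]} (hf : f.Monic) (hg : g.Monic)
    (hfdvd : f ∣ X ^ n - 1) (hgdvd : g ∣ X ^ n - 1) :
    Module.finrank K (QCcode n f g h) = 2 * n - f.natDegree - g.natDegree := by
  rw [← range_qcMap hn hf hg hfdvd hgdvd,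
    LinearMap.finrank_range_of_inj (qcMap_injective hn hfdvd hgdvd), Module.finrank_prod,
    (degreeLTEquiv K _).finrank_eq, (degreeLTEquiv K _).finrank_eq, Module.finrank_fin_fun,
    Module.finrank_fin_fun]
  have := natDegree_le_of_dvd_X_pow_sub_one hn hfdvd
  have := natDegree_le_of_dvd_X_pow_sub_one hn hgdvd
  omega

end Dimension

section Distance

lemma div_gcd_dvd_of_dvd_mul {R : Type*} [EuclideanDomain R] [GCDMonoid R] {g c h : R}
    (hg : g ≠ 0) (hdvd : g ∣ c * h) : g / gcd g h ∣ c := by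
  have hd : gcd g h ≠ 0 := fun h0 => hg ((gcd_eq_zero_iff g h).mp h0).1
  refine (mul_dvd_mul_iff_left hd).mp ?_
  rw [EuclideanDomain.mul_div_cancel' hd (gcd_dvd_left g h), mul_comm]
  exact dvd_mul_gcd_iff_dvd_mul.mpr hdvd

variable {K : Type*} [Field K] {n : ℕ}

lemma hWt_zero : hWt (0 : Fin n → K) = 0 := by
  simp [hWt]

lemma cycDist_le_hWt {u c : K[X]} (hu : u ∣ c) (hc : vecOf n c ≠ 0) :
    cycDist n u ≤ hWt (vecOf n c) := by
  obtain ⟨e, rfl⟩ := hu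
  exact Nat.sInf_le ⟨e, by rwa [mul_comm], by rw [mul_comm]⟩

variable [DecidableEq K]

lemma lcm_div_gcd_dvd_of_X_pow_sub_one_dvd (hn : 0 < n) {f g h a b : K[X]} (hgdvd : g ∣ X ^ n - 1)
    (hab : X ^ n - 1 ∣ a * h * f + b * g) : lcm f (g / gcd g h) ∣ a * f := by
  have hg : g ≠ 0 := ne_zero_of_dvd_ne_zero (monic_X_pow_sub_one hn).ne_zero hgdvd
  have hgahf : g ∣ a * f * h := by
    rw [mul_right_comm]
    exact (dvd_add_left (dvd_mul_left g b)).mp (hgdvd.trans hab)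
  exact lcm_dvd (dvd_mul_left f a) (div_gcd_dvd_of_dvd_mul hg hgahf)

lemma dEucl_le_hWt2 (hn : 0 < n) {f g h : K[X]} (hgdvd : g ∣ X ^ n - 1)
    {v : (Fin n → K) × (Fin n → K)} (hv : v ∈ QCcode n f g h) (hv0 : v ≠ 0) :
    dEucl n f g h ≤ hWt2 v := by
  obtain ⟨a, b, rfl⟩ := hv
  simp only [dEucl, hWt2]
  by_cases hA : vecOf n (a * f) = 0
  · have hB : vecOf n (a * h * f + b * g) ≠ 0 := fun hB => hv0 (Prod.ext hA hB)
    have hgA : g ∣ a * h * f := by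
      rw [mul_right_comm]
      exact dvd_mul_of_dvd_left (hgdvd.trans ((vecOf_eq_zero_iff hn).mp hA)) h
    have := cycDist_le_hWt (dvd_add hgA (dvd_mul_left g b)) hB
    rw [hA, hWt_zero]
    omega
  by_cases hB : vecOf n (a * h * f + b * g) = 0
  · have := cycDist_le_hWt
      (lcm_div_gcd_dvd_of_X_pow_sub_one_dvd hn hgdvd ((vecOf_eq_zero_iff hn).mp hB)) hA
    rw [hB, hWt_zero]
    omega
  have h₁ := cycDist_le_hWt (dvd_mul_left f a) hA
  have hgcd : gcd (h * f) g ∣ a * h * f + b * g :=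
    dvd_add ((gcd_dvd_left _ _).trans ⟨a, by ring⟩) ((gcd_dvd_right _ _).trans (dvd_mul_left g b))
  have h₂ := cycDist_le_hWt hgcd hB
  omega

end Distance

theorem stmt18_general [Fintype F] (p r q n : ℕ) (hp : p.Prime) (hq : q = p ^ r)
    (hF : Fintype.card F = q ^ 2) (hn : 0 < n) (f g h : F[X])
    (hf : f.Monic) (hg : g.Monic)
    (hfdvd : f ∣ X ^ n - 1) (hgdvd : g ∣ X ^ n - 1)
    (hd1 : f ∣ g) (hd2 : g ∣ perpPoly n (polyQ q g))
    (hd3 : perpPoly n (polyQ q g) ∣ perpPoly n (polyQ q f)) :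
    hDualSet q (QCcode n f g h : Set ((Fin n → F) × (Fin n → F))) ⊆
        (QCcode n f g h : Set ((Fin n → F) × (Fin n → F))) ∧
      Module.finrank F (QCcode n f g h) = 2 * n - f.natDegree - g.natDegree ∧
      ∀ v ∈ QCcode n f g h, v ≠ 0 → hWt2 v ≥ dEucl n f g h := by
  obtain ⟨φ, hφ, hφφ⟩ := exists_ringHom_pow_involutive hp hq hF
  simp only [polyQ_eq_map hφ] at hd2 hd3
  exact ⟨hDualSet_subset_QCcode hn φ hφ hφφ hf hg hfdvd hgdvd hd1 hd2 hd3,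
    finrank_QCcode hn hf hg hfdvd hgdvd, fun v hv hv0 => dEucl_le_hWt2 hn hgdvd hv hv0⟩

/-- if `f ∣ g ∣ (g^[q])^⊥ ∣ (f^[q])^⊥`, then `Q_{q^2}(f,g,h)` contains its
Hermitian dual, has dimension `2n - deg f - deg g` over `F_{q^2}`, and minimum Hamming
weight at least `d_{q^2}^e(f,g,h)`. -/
theorem stmt18 [Fintype F] (p r q n : ℕ) (hp : p.Prime) (hr : 0 < r) (hq : q = p ^ r)
    (hF : Fintype.card F = q ^ 2) (hn : 0 < n) (f g h : F[X])
    (hf : f.Monic) (hg : g.Monic) (hh : h.Monic)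
    (hfd : f.degree < n) (hgd : g.degree < n) (hhd : h.degree < n)
    (hfdvd : f ∣ X ^ n - 1) (hgdvd : g ∣ X ^ n - 1)
    (hd1 : f ∣ g) (hd2 : g ∣ perpPoly n (polyQ q g))
    (hd3 : perpPoly n (polyQ q g) ∣ perpPoly n (polyQ q f)) :
    hDualSet q (QCcode n f g h : Set ((Fin n → F) × (Fin n → F))) ⊆
        (QCcode n f g h : Set ((Fin n → F) × (Fin n → F))) ∧
      Module.finrank F (QCcode n f g h) = 2 * n - f.natDegree - g.natDegree ∧
      ∀ v ∈ QCcode n f g h, v ≠ 0 → hWt2 v ≥ dEucl n f g h :=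
  stmt18_general p r q n hp hq hF hn f g h hf hg hfdvd hgdvd hd1 hd2 hd3

end
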